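/- arXiv:2205.15993 — 2 statements merged into one kernel-verified Lean document; each statement's English description precedes it below -/
import Mathlib

section
/- Let Σ=(X,U,φ) be a forward complete system with inputs and let ‖·‖_U be an admissible functional on U. Then Σ is ISS with respect to ‖·‖_U if and only if Σ has the following three properties: (C1) uniformly bounded reachability sets (UBRS); (C2) uniform continuity at the equilibrium point (UCEP); (C3) uniform (with respect to initial time and initial state) asymptotic gain (UUAG). -/
open Set Filter

/-- A (forward complete) time-varying system with inputs `Σ = (X, U, φ)`:
`U` is a set of admissible inputs containing the zero input and closed under
concatenation, and `φ` is a transition map satisfying the identity, causality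
and semigroup axioms. -/
structure Sys (X Uv : Type*) [NormedAddCommGroup X] [NormedSpace ℝ X]
    [AddCommGroup Uv] [Module ℝ Uv] where
  U : Set (ℝ → Uv)
  zero_mem : (fun _ => (0 : Uv)) ∈ U
  concat_mem : ∀ u ∈ U, ∀ v ∈ U, ∀ t : ℝ, 0 < t →
      (fun r => if r ≤ t then u r else v r) ∈ U
  phi : ℝ → ℝ → X → (ℝ → Uv) → X
  identity : ∀ t : ℝ, 0 ≤ t → ∀ x u, u ∈ U → phi t t x u = x
  causality : ∀ s t : ℝ, ∀ x : X, ∀ u v, 0 ≤ s → s < t → u ∈ U → v ∈ U →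
      (∀ r, s < r → r ≤ t → v r = u r) → phi t s x v = phi t s x u
  semigroup : ∀ s τ t : ℝ, ∀ x : X, ∀ u, 0 ≤ s → s < τ → τ < t → u ∈ U →
      phi t τ (phi τ s x u) u = phi t s x u

variable {X Uv : Type*} [NormedAddCommGroup X] [NormedSpace ℝ X]
  [AddCommGroup Uv] [Module ℝ Uv]

/-- The truncation `u_(s,t]` of an input. -/
noncomputable def trunc (u : ℝ → Uv) (s t : ℝ) : ℝ → Uv := fun r => if s < r ∧ r ≤ t then u r else 0

/-- The truncation `u_(s,∞)` of an input. -/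
noncomputable def truncFrom (u : ℝ → Uv) (s : ℝ) : ℝ → Uv := fun r => if s < r then u r else 0

/-- An admissible functional `‖·‖_U : U → [0,∞]`. -/
structure IsAdmissible (S : Sys X Uv) (nrm : (ℝ → Uv) → ENNReal) : Prop where
  zero : nrm (fun _ => (0 : Uv)) = 0
  fin : ∀ u ∈ S.U, ∀ s t : ℝ, 0 ≤ s → s < t → nrm (trunc u s t) < ⊤
  le_tail : ∀ u ∈ S.U, ∀ s t : ℝ, 0 ≤ s → s < t → nrm (trunc u s t) ≤ nrm (truncFrom u s)
  tail_le : ∀ u ∈ S.U, ∀ s : ℝ, 0 ≤ s → nrm (truncFrom u s) ≤ nrm u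

/-- A function of class `K`. -/
def ClassK (α : ℝ → ℝ) : Prop :=
  ContinuousOn α (Ici 0) ∧ StrictMonoOn α (Ici 0) ∧ α 0 = 0

/-- A function of class `K∞`. -/
def ClassKInf (α : ℝ → ℝ) : Prop := ClassK α ∧ Tendsto α atTop atTop


/-- A function of class `KL`. -/
def ClassKL (β : ℝ → ℝ → ℝ) : Prop :=
  (∀ t ≥ (0:ℝ), ClassK (fun r => β r t)) ∧
  (∀ r ≥ (0:ℝ), AntitoneOn (fun t => β r t) (Ici 0) ∧
    Tendsto (fun t => β r t) atTop (nhds 0))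

/-- Assumption 1: continuity of trajectories with respect to the input at the zero input,
uniformly over the initial time. -/
def AssumptionA1 (S : Sys X Uv) (nrm : (ℝ → Uv) → ENNReal) : Prop :=
  ∀ r > (0:ℝ), ∀ ε > (0:ℝ), ∀ T > (0:ℝ), ∃ δ > (0:ℝ),
    ∀ t0 ≥ (0:ℝ), ∀ x0 : X, ∀ u ∈ S.U, nrm u ≤ ENNReal.ofReal δ →
      ∀ tstar ∈ Icc t0 (t0 + T),
        (∀ t ∈ Icc t0 tstar,
            ‖S.phi t t0 x0 u‖ ≤ r ∧ ‖S.phi t t0 x0 (fun _ => 0)‖ ≤ r) →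
        ∀ t ∈ Icc t0 tstar,
          ‖S.phi t t0 x0 (fun _ => 0) - S.phi t t0 x0 u‖ ≤ ε

/-- The system is 0-GUAS: globally uniformly asymptotically stable under zero input. -/
def ZeroGUAS (S : Sys X Uv) : Prop :=
  ∃ β, ClassKL β ∧ ∀ t0 ≥ (0:ℝ), ∀ x0 : X, ∀ t ≥ t0,
    ‖S.phi t t0 x0 (fun _ => 0)‖ ≤ β ‖x0‖ (t - t0)

/-- The system is ISS with respect to the admissible functional `nrm`.
Inputs with infinite `nrm` satisfy the estimate trivially thanks to the
convention `ρ(∞) = ∞`, so only inputs of finite `nrm` are quantified over. -/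
def ISS (S : Sys X Uv) (nrm : (ℝ → Uv) → ENNReal) : Prop :=
  ∃ β ρ, ClassKL β ∧ ClassKInf ρ ∧
    ∀ t0 ≥ (0:ℝ), ∀ x0 : X, ∀ u ∈ S.U, nrm u < ⊤ → ∀ t ≥ t0,
      ‖S.phi t t0 x0 u‖ ≤ β ‖x0‖ (t - t0) + ρ (nrm u).toReal

/-- The system is UGB (uniformly globally bounded) with respect to `nrm`. -/
def UGB (S : Sys X Uv) (nrm : (ℝ → Uv) → ENNReal) : Prop :=
  ∃ c α ρ, 0 ≤ c ∧ ClassKInf α ∧ ClassKInf ρ ∧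
    ∀ t0 ≥ (0:ℝ), ∀ x0 : X, ∀ u ∈ S.U, nrm u < ⊤ → ∀ t ≥ t0,
      ‖S.phi t t0 x0 u‖ ≤ c + α ‖x0‖ + ρ (nrm u).toReal

/-- The system is UGS (uniformly globally stable) with respect to `nrm`, i.e. UGB with `c = 0`. -/
def UGS (S : Sys X Uv) (nrm : (ℝ → Uv) → ENNReal) : Prop :=
  ∃ α ρ, ClassKInf α ∧ ClassKInf ρ ∧
    ∀ t0 ≥ (0:ℝ), ∀ x0 : X, ∀ u ∈ S.U, nrm u < ⊤ → ∀ t ≥ t0,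
      ‖S.phi t t0 x0 u‖ ≤ α ‖x0‖ + ρ (nrm u).toReal

/-- Condition (E) on the admissible functional. -/
def CondE (S : Sys X Uv) (nrm : (ℝ → Uv) → ENNReal) : Prop :=
  ∀ u ∈ S.U, ∀ t1 t2 t3 : ℝ, 0 ≤ t1 → t1 < t2 → t2 < t3 →
    nrm (trunc u t1 t2) + nrm (trunc u t2 t3) ≤ nrm (trunc u t1 t3)

/-- Uniformly bounded reachability sets. -/
def UBRS (S : Sys X Uv) (nrm : (ℝ → Uv) → ENNReal) : Prop :=
  ∀ T > (0:ℝ), ∀ r > (0:ℝ), ∀ s > (0:ℝ), ∃ C, 0 ≤ C ∧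
    ∀ t0 ≥ (0:ℝ), ∀ x0 : X, ‖x0‖ ≤ r → ∀ u ∈ S.U, nrm u ≤ ENNReal.ofReal s →
      ∀ t ∈ Icc t0 (t0 + T), ‖S.phi t t0 x0 u‖ ≤ C

/-- Uniform continuity at the equilibrium point. -/
def UCEP (S : Sys X Uv) (nrm : (ℝ → Uv) → ENNReal) : Prop :=
  ∀ h > (0:ℝ), ∀ ε > (0:ℝ), ∃ δ > (0:ℝ),
    ∀ t0 ≥ (0:ℝ), ∀ x0 : X, ‖x0‖ ≤ δ → ∀ u ∈ S.U, nrm u ≤ ENNReal.ofReal δ →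
      ∀ t ∈ Icc t0 (t0 + h), ‖S.phi t t0 x0 u‖ ≤ ε

/-- Uniform (w.r.t. initial time and initial state) asymptotic gain.
Inputs with infinite `nrm` satisfy the estimate trivially thanks to the convention
`ν(∞) = ∞`, so only inputs of finite `nrm` are quantified over. -/
def UUAG (S : Sys X Uv) (nrm : (ℝ → Uv) → ENNReal) : Prop :=
  ∃ ν, ClassK ν ∧ ∀ r ε : ℝ, 0 < ε → ε ≤ r → ∃ T > (0:ℝ),
    ∀ t0 ≥ (0:ℝ), ∀ x0 : X, ‖x0‖ ≤ r → ∀ u ∈ S.U, nrm u < ⊤ →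
      ∀ t ≥ t0 + T, ‖S.phi t t0 x0 u‖ ≤ ε + ν (nrm u).toReal

open Topology

/-!
ISS gives the three properties directly from its estimate. Conversely, UBRS bounds trajectories
on `[t0, t0 + T]` and UUAG bounds them afterwards, so `w c = sup ‖φ(t, t0, x0, u)‖` over
`‖x0‖, ‖u‖ ≤ c` is finite; UCEP and UUAG together force `w c → 0` as `c → 0`, and a `K∞` majorant
of `w` yields uniform global stability `‖φ‖ ≤ α ‖x0‖ + ρ ‖u‖`. Then the excess `ψ r τ` of `‖φ‖` over
the gain `ρ + ν` (`ν` the UUAG gain), taken over `‖x0‖ ≤ r` and times at least `τ` after the start,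
is at most `α r` and tends to `0` as `τ → ∞` by UUAG; a `KL` majorant of `ψ` is the ISS bound.
Both majorants are built by averaging monotone functions.
-/

namespace ClassK

variable {α ν : ℝ → ℝ}

lemma monotoneOn (hα : ClassK α) : MonotoneOn α (Ici 0) :=
  hα.2.1.monotoneOn

lemma nonneg (hα : ClassK α) {x : ℝ} (hx : 0 ≤ x) : 0 ≤ α x :=
  hα.2.2 ▸ hα.monotoneOn self_mem_Ici hx hx

lemma apply_le_apply (hα : ClassK α) {x y : ℝ} (hx : 0 ≤ x) (hxy : x ≤ y) : α x ≤ α y :=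
  hα.monotoneOn hx (hx.trans hxy) hxy

lemma apply_max_le_add (hα : ClassK α) {x y : ℝ} (hx : 0 ≤ x) (hy : 0 ≤ y) :
    α (max x y) ≤ α x + α y := by
  rcases le_total x y with h | h
  · simpa [max_eq_right h] using hα.nonneg hx
  · simpa [max_eq_left h] using hα.nonneg hy

lemma exists_pos_apply_le (hα : ClassK α) {ε : ℝ} (hε : 0 < ε) : ∃ δ > 0, α δ ≤ ε := by
  have hcont : ContinuousWithinAt α (Ioi 0) 0 := (hα.1 0 self_mem_Ici).mono Ioi_subset_Ici_self
  have hsmall : ∀ᶠ x in 𝓝[>] 0, α x < ε := hcont.eventually (hα.2.2 ▸ Iio_mem_nhds hε)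
  obtain ⟨δ, hδ, hδpos⟩ := (hsmall.and self_mem_nhdsWithin).exists
  exact ⟨δ, hδpos, hδ.le⟩

lemma add (hα : ClassK α) (hν : ClassK ν) : ClassK fun x => α x + ν x :=
  ⟨hα.1.add hν.1, hα.2.1.add hν.2.1, by simp [hα.2.2, hν.2.2]⟩

end ClassK

lemma ClassKInf.add_classK {ρ ν : ℝ → ℝ} (hρ : ClassKInf ρ) (hν : ClassK ν) :
    ClassKInf fun x => ρ x + ν x := by
  refine ⟨hρ.1.add hν, tendsto_atTop_mono' atTop ?_ hρ.2⟩
  filter_upwards [eventually_ge_atTop 0] with x hx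
  simpa using hν.nonneg hx

lemma ClassKL.apply_le_apply {β : ℝ → ℝ → ℝ} (hβ : ClassKL β) {r r' t t' : ℝ} (hr : 0 ≤ r)
    (hrr' : r ≤ r') (ht : 0 ≤ t) (htt' : t ≤ t') : β r t' ≤ β r' t :=
  calc β r t' ≤ β r' t' := (hβ.1 t' (ht.trans htt')).apply_le_apply hr hrr'
    _ ≤ β r' t := (hβ.2 r' (hr.trans hrr')).1 ht (ht.trans htt') htt'

namespace Monotone

variable {f : ℝ → ℝ}

lemma le_integral_add_one (hf : Monotone f) (a : ℝ) : f a ≤ ∫ x in a..a + 1, f x :=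
  calc f a = ∫ _ in a..a + 1, f a := by simp
    _ ≤ ∫ x in a..a + 1, f x := intervalIntegral.integral_mono_on (by linarith)
      intervalIntegrable_const hf.intervalIntegrable fun x hx => hf hx.1

lemma integral_add_one_le (hf : Monotone f) (a : ℝ) : ∫ x in a..a + 1, f x ≤ f (a + 1) :=
  calc ∫ x in a..a + 1, f x ≤ ∫ _ in a..a + 1, f (a + 1) := intervalIntegral.integral_mono_on
        (by linarith) hf.intervalIntegrable intervalIntegrable_const fun x hx => hf hx.2
    _ = f (a + 1) := by simp

lemma monotone_integral_add_one (hf : Monotone f) : Monotone fun a => ∫ x in a..a + 1, f x := by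
  intro a b hab
  have shift : ∀ c, ∫ x in c..c + 1, f x = ∫ x in (0 : ℝ)..1, f (x + c) := fun c => by
    rw [intervalIntegral.integral_comp_add_right, zero_add, add_comm]
  simp only [shift]
  exact intervalIntegral.integral_mono_on zero_le_one
    (hf.comp (monotone_id.add_const a)).intervalIntegrable
    (hf.comp (monotone_id.add_const b)).intervalIntegrable fun x _ => hf (by linarith)

lemma continuous_integral_add_one (hf : Monotone f) :
    Continuous fun a => ∫ x in a..a + 1, f x := by
  have hF := intervalIntegral.continuous_primitive (μ := MeasureTheory.volume)
    (fun _ _ => hf.intervalIntegrable) 0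
  refine ((hF.comp (continuous_add_const 1)).sub hF).congr fun a => ?_
  exact intervalIntegral.integral_interval_sub_left hf.intervalIntegrable hf.intervalIntegrable

end Monotone

lemma exists_classKL_ge {ψ : ℝ → ℝ → ℝ} {κ : ℝ → ℝ} (hκ : ClassK κ)
    (hψ_nonneg : ∀ r t, 0 ≤ ψ r t) (hψ_mono : ∀ t, Monotone (ψ · t))
    (hψ_anti : ∀ r, Antitone (ψ r)) (hψκ : ∀ r ≥ 0, ∀ t, ψ r t ≤ κ r)
    (hψ_lim : ∀ r, Tendsto (ψ r) atTop (𝓝 0)) :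
    ∃ β, ClassKL β ∧ ∀ r ≥ 0, ∀ t ≥ 0, ψ r t ≤ β r t := by
  -- Averaging over `[r, r + 1]` makes `ψ` continuous in `r` without destroying the other bounds.
  set avg : ℝ → ℝ → ℝ := fun r t => ∫ p in r..r + 1, ψ p t
  have le_avg : ∀ r t, ψ r t ≤ avg r t := fun r t => (hψ_mono t).le_integral_add_one r
  have avg_nonneg : ∀ r t, 0 ≤ avg r t := fun r t => (hψ_nonneg r t).trans (le_avg r t)
  have avg_anti : ∀ r, Antitone (avg r) := fun r t t' h =>
    intervalIntegral.integral_mono_on (by linarith) (hψ_mono t').intervalIntegrable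
      (hψ_mono t).intervalIntegrable fun p _ => hψ_anti p h
  have avg_lim : ∀ r, Tendsto (avg r) atTop (𝓝 0) := fun r =>
    squeeze_zero (avg_nonneg r) (fun t => (hψ_mono t).integral_add_one_le r) (hψ_lim (r + 1))
  refine ⟨fun r t => min (κ r) (avg r t) + r * Real.exp (-t),
    ⟨fun t _ => ⟨?_, ?_, ?_⟩, fun r hr => ⟨?_, ?_⟩⟩, fun r hr t _ => ?_⟩
  · exact (ContinuousOn.inf hκ.1 (hψ_mono t).continuous_integral_add_one.continuousOn).add
      (continuousOn_id.mul continuousOn_const)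
  · refine MonotoneOn.add_strictMono (fun a ha b hb hab => ?_)
      fun a _ b _ hab => mul_lt_mul_of_pos_right hab (Real.exp_pos _)
    exact min_le_min (hκ.monotoneOn ha hb hab) ((hψ_mono t).monotone_integral_add_one hab)
  · simp [hκ.2.2, avg_nonneg]
  · intro t _ t' ht' htt'
    exact add_le_add (min_le_min le_rfl (avg_anti r htt'))
      (mul_le_mul_of_nonneg_left (Real.exp_le_exp.2 (neg_le_neg htt')) hr)
  · have hmin : Tendsto (fun t => min (κ r) (avg r t)) atTop (𝓝 0) :=
      squeeze_zero (fun t => le_min (hκ.nonneg hr) (avg_nonneg r t)) (fun t => min_le_right _ _)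
        (avg_lim r)
    simpa using hmin.add (Real.tendsto_exp_neg_atTop_nhds_zero.const_mul r)
  · exact le_add_of_le_of_nonneg (le_min (hψκ r hr t) (le_avg r t))
      (mul_nonneg hr (Real.exp_pos _).le)

lemma Monotone.continuousAt_integral_comp_mul {w : ℝ → ℝ} (hw : Monotone w) {a b c : ℝ}
    (hc : c ≠ 0) : ContinuousAt (fun s => ∫ y in a..b, w (s * y)) c := by
  have hF := intervalIntegral.continuous_primitive (μ := MeasureTheory.volume)
    (fun _ _ => hw.intervalIntegrable) 0
  have hcont : ContinuousAt (fun s => s⁻¹ * ((∫ x in 0..s * b, w x) - ∫ x in 0..s * a, w x)) c :=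
    (continuousAt_inv₀ hc).mul
      ((hF.comp (continuous_mul_const b)).sub (hF.comp (continuous_mul_const a))).continuousAt
  refine hcont.congr ((eventually_ne_nhds hc).mono fun s hs => ?_)
  dsimp only
  rw [intervalIntegral.integral_comp_mul_left _ hs, smul_eq_mul,
    intervalIntegral.integral_interval_sub_left hw.intervalIntegrable hw.intervalIntegrable]

lemma exists_classKInf_ge {w : ℝ → ℝ} (hw : Monotone w) (hw0 : 0 ≤ w 0)
    (hsmall : ∀ ε > 0, ∃ δ > 0, w δ ≤ ε) : ∃ σ, ClassKInf σ ∧ ∀ c ≥ 0, w c ≤ σ c := by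
  have hw0' : w 0 = 0 := le_antisymm (le_of_forall_pos_le_add fun ε hε => by
    obtain ⟨δ, hδ, hwδ⟩ := hsmall ε hε
    linarith [hw hδ.le]) hw0
  have hcomp : ∀ {c}, 0 ≤ c → Monotone fun y => w (c * y) := fun hc =>
    hw.comp (monotone_mul_left_of_nonneg hc)
  -- `∫ y in 1..2, w (c * y)` is the mean of `w` over `[c, 2c]`, which is continuous for `c > 0`.
  have le_mean : ∀ c ≥ 0, w c ≤ ∫ y in (1:ℝ)..2, w (c * y) := fun c hc => by
    simpa [one_add_one_eq_two] using (hcomp hc).le_integral_add_one 1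
  have mean_le : ∀ c ≥ 0, ∫ y in (1:ℝ)..2, w (c * y) ≤ w (2 * c) := fun c hc => by
    simpa [one_add_one_eq_two, mul_comm] using (hcomp hc).integral_add_one_le 1
  refine ⟨fun c => c + ∫ y in (1:ℝ)..2, w (c * y), ⟨⟨fun c hc => ?_, ?_, by simp [hw0']⟩, ?_⟩,
    fun c hc => le_add_of_nonneg_of_le hc (le_mean c hc)⟩
  · rcases (mem_Ici.1 hc).eq_or_lt with rfl | hc
    · rw [Metric.continuousWithinAt_iff]
      intro ε hε
      obtain ⟨δ, hδ, hwδ⟩ := hsmall (ε / 2) (half_pos hε)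
      refine ⟨min (δ / 2) (ε / 2), by positivity, fun c (hc : 0 ≤ c) hcδ => ?_⟩
      rw [Real.dist_eq, sub_zero, abs_of_nonneg hc, lt_min_iff] at hcδ
      have hσc : 0 ≤ c + ∫ y in (1:ℝ)..2, w (c * y) := by linarith [le_mean c hc, hw hc]
      have hσ0 : (0 : ℝ) + ∫ y in (1:ℝ)..2, w (0 * y) = 0 := by simp [hw0']
      rw [hσ0, Real.dist_eq, sub_zero, abs_of_nonneg hσc]
      linarith [mean_le c hc, hw (show 2 * c ≤ δ by linarith)]
    · exact (continuousAt_id.add (hw.continuousAt_integral_comp_mul hc.ne')).continuousWithinAt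
  · refine strictMono_id.strictMonoOn _ |>.add_monotone fun a ha b _ hab => ?_
    exact intervalIntegral.integral_mono_on one_le_two (hcomp ha).intervalIntegrable
      (hcomp (ha.trans hab)).intervalIntegrable fun y hy =>
        hw (mul_le_mul_of_nonneg_right hab (by linarith [hy.1]))
  · refine tendsto_atTop_mono' atTop ?_ tendsto_id
    filter_upwards [eventually_ge_atTop 0] with c hc
    show c ≤ _
    linarith [le_mean c hc, hw hc]

lemma Real.sSup_le_sSup_of_nonneg {s t : Set ℝ} (hst : s ⊆ t) (ht : BddAbove t)
    (ht0 : ∀ y ∈ t, 0 ≤ y) : sSup s ≤ sSup t :=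
  Real.sSup_le (fun _ hy => le_csSup ht (hst hy)) (Real.sSup_nonneg ht0)

section Trajectories

variable {S : Sys X Uv} {nrm : (ℝ → Uv) → ENNReal}

lemma ISS.ubrs (h : ISS S nrm) : UBRS S nrm := by
  obtain ⟨β, ρ, hβ, hρ, hest⟩ := h
  intro T _ r hr s hs
  refine ⟨β r 0 + ρ s, add_nonneg ((hβ.1 0 le_rfl).nonneg hr.le) (hρ.1.nonneg hs.le),
    fun t0 ht0 x0 hx0 u hu hnu t ht => ?_⟩
  calc ‖S.phi t t0 x0 u‖ ≤ β ‖x0‖ (t - t0) + ρ (nrm u).toReal :=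
        hest t0 ht0 x0 u hu (hnu.trans_lt ENNReal.ofReal_lt_top) t ht.1
    _ ≤ β r 0 + ρ s :=
        add_le_add (hβ.apply_le_apply (norm_nonneg _) hx0 le_rfl (by linarith [ht.1]))
          (hρ.1.apply_le_apply ENNReal.toReal_nonneg (ENNReal.toReal_le_of_le_ofReal hs.le hnu))

lemma ISS.ucep (h : ISS S nrm) : UCEP S nrm := by
  obtain ⟨β, ρ, hβ, hρ, hest⟩ := h
  intro _ _ ε hε
  obtain ⟨δ, hδ, hδε⟩ := ((hβ.1 0 le_rfl).add hρ.1).exists_pos_apply_le hε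
  refine ⟨δ, hδ, fun t0 ht0 x0 hx0 u hu hnu t ht => ?_⟩
  calc ‖S.phi t t0 x0 u‖ ≤ β ‖x0‖ (t - t0) + ρ (nrm u).toReal :=
        hest t0 ht0 x0 u hu (hnu.trans_lt ENNReal.ofReal_lt_top) t ht.1
    _ ≤ β δ 0 + ρ δ :=
        add_le_add (hβ.apply_le_apply (norm_nonneg _) hx0 le_rfl (by linarith [ht.1]))
          (hρ.1.apply_le_apply ENNReal.toReal_nonneg (ENNReal.toReal_le_of_le_ofReal hδ.le hnu))
    _ ≤ ε := hδε

lemma ISS.uuag (h : ISS S nrm) : UUAG S nrm := by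
  obtain ⟨β, ρ, hβ, hρ, hest⟩ := h
  refine ⟨ρ, hρ.1, fun r ε hε hεr => ?_⟩
  obtain ⟨T, hTε, hT⟩ := (((hβ.2 r (hε.le.trans hεr)).2.eventually (gt_mem_nhds hε)).and
    (eventually_gt_atTop 0)).exists
  refine ⟨T, hT, fun t0 ht0 x0 hx0 u hu hfin t ht => ?_⟩
  calc ‖S.phi t t0 x0 u‖ ≤ β ‖x0‖ (t - t0) + ρ (nrm u).toReal :=
        hest t0 ht0 x0 u hu hfin t (by linarith)
    _ ≤ ε + ρ (nrm u).toReal := by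
        gcongr
        exact (hβ.apply_le_apply (norm_nonneg _) hx0 hT.le (by linarith)).trans hTε.le

lemma UBRS.exists_bound_of_uuag (hB : UBRS S nrm) (hG : UUAG S nrm) {r s : ℝ} (hr : 0 < r)
    (hs : 0 < s) : ∃ C, ∀ t0 ≥ (0:ℝ), ∀ x0 : X, ‖x0‖ ≤ r → ∀ u ∈ S.U,
      nrm u ≤ ENNReal.ofReal s → ∀ t ≥ t0, ‖S.phi t t0 x0 u‖ ≤ C := by
  obtain ⟨ν, hν, hG⟩ := hG
  obtain ⟨T, hT, hTag⟩ := hG r r hr le_rfl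
  obtain ⟨C, -, hC⟩ := hB T hT r hr s hs
  refine ⟨max C (r + ν s), fun t0 ht0 x0 hx0 u hu hnu t ht => ?_⟩
  rcases le_or_gt t (t0 + T) with htT | htT
  · exact (hC t0 ht0 x0 hx0 u hu hnu t ⟨ht, htT⟩).trans (le_max_left _ _)
  · calc ‖S.phi t t0 x0 u‖ ≤ r + ν (nrm u).toReal :=
          hTag t0 ht0 x0 hx0 u hu (hnu.trans_lt ENNReal.ofReal_lt_top) t htT.le
      _ ≤ r + ν s := by
          gcongr
          exact hν.apply_le_apply ENNReal.toReal_nonneg (ENNReal.toReal_le_of_le_ofReal hs.le hnu)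
      _ ≤ max C (r + ν s) := le_max_right _ _

lemma UCEP.exists_bound_of_uuag (hC : UCEP S nrm) (hG : UUAG S nrm) {ε : ℝ} (hε : 0 < ε) :
    ∃ δ > 0, ∀ t0 ≥ (0:ℝ), ∀ x0 : X, ‖x0‖ ≤ δ → ∀ u ∈ S.U,
      nrm u ≤ ENNReal.ofReal δ → ∀ t ≥ t0, ‖S.phi t t0 x0 u‖ ≤ ε := by
  obtain ⟨ν, hν, hG⟩ := hG
  obtain ⟨δ₁, hδ₁, hνδ₁⟩ := hν.exists_pos_apply_le (half_pos hε)
  obtain ⟨T, hT, hTag⟩ := hG 1 (min (ε / 2) 1) (by positivity) (min_le_right _ _)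
  obtain ⟨δ₂, hδ₂, hC⟩ := hC T hT ε hε
  refine ⟨min (min δ₁ δ₂) 1, by positivity, fun t0 ht0 x0 hx0 u hu hnu t ht => ?_⟩
  have hδ₂' : ENNReal.ofReal (min (min δ₁ δ₂) 1) ≤ ENNReal.ofReal δ₂ :=
    ENNReal.ofReal_le_ofReal ((min_le_left _ _).trans (min_le_right _ _))
  have hnuδ₁ : (nrm u).toReal ≤ δ₁ := ENNReal.toReal_le_of_le_ofReal hδ₁.le
    (hnu.trans (ENNReal.ofReal_le_ofReal ((min_le_left _ _).trans (min_le_left _ _))))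
  rcases le_or_gt t (t0 + T) with htT | htT
  · exact hC t0 ht0 x0 (hx0.trans ((min_le_left _ _).trans (min_le_right _ _))) u hu
      (hnu.trans hδ₂') t ⟨ht, htT⟩
  · calc ‖S.phi t t0 x0 u‖ ≤ min (ε / 2) 1 + ν (nrm u).toReal :=
          hTag t0 ht0 x0 (hx0.trans (min_le_right _ _)) u hu
            (hnu.trans_lt ENNReal.ofReal_lt_top) t htT.le
      _ ≤ ε / 2 + ν δ₁ :=
          add_le_add (min_le_left _ _) (hν.apply_le_apply ENNReal.toReal_nonneg hnuδ₁)
      _ ≤ ε := by linarith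

end Trajectories

section Envelopes

variable (S : Sys X Uv) (nrm : (ℝ → Uv) → ENNReal)

def reachableNorms (c : ℝ) : Set ℝ :=
  {y | ∃ t0 ≥ (0:ℝ), ∃ x0 : X, ‖x0‖ ≤ c ∧ ∃ u ∈ S.U, nrm u ≤ ENNReal.ofReal c ∧
    ∃ t ≥ t0, y = ‖S.phi t t0 x0 u‖}

def gainExcess (γ : ℝ → ℝ) (r τ : ℝ) : Set ℝ :=
  {y | ∃ t0 ≥ (0:ℝ), ∃ x0 : X, ‖x0‖ ≤ r ∧ ∃ u ∈ S.U, nrm u < ⊤ ∧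
    ∃ t ≥ t0, t0 + τ ≤ t ∧ y = max (‖S.phi t t0 x0 u‖ - γ (nrm u).toReal) 0}

variable {S nrm}

lemma reachableNorms_mono : Monotone (reachableNorms S nrm) := by
  rintro c c' hc _ ⟨t0, ht0, x0, hx0, u, hu, hnu, t, ht, rfl⟩
  exact ⟨t0, ht0, x0, hx0.trans hc, u, hu, hnu.trans (ENNReal.ofReal_le_ofReal hc), t, ht, rfl⟩

lemma nonneg_of_mem_reachableNorms {c y : ℝ} (hy : y ∈ reachableNorms S nrm c) : 0 ≤ y := by
  obtain ⟨_, _, _, _, _, _, _, _, _, rfl⟩ := hy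
  exact norm_nonneg _

lemma mem_upperBounds_reachableNorms {c C : ℝ} (h : ∀ t0 ≥ (0:ℝ), ∀ x0 : X, ‖x0‖ ≤ c →
    ∀ u ∈ S.U, nrm u ≤ ENNReal.ofReal c → ∀ t ≥ t0, ‖S.phi t t0 x0 u‖ ≤ C) :
    C ∈ upperBounds (reachableNorms S nrm c) := by
  rintro _ ⟨t0, ht0, x0, hx0, u, hu, hnu, t, ht, rfl⟩
  exact h t0 ht0 x0 hx0 u hu hnu t ht

lemma gainExcess_mono {γ : ℝ → ℝ} {r r' τ τ' : ℝ} (hr : r ≤ r') (hτ : τ' ≤ τ) :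
    gainExcess S nrm γ r τ ⊆ gainExcess S nrm γ r' τ' := by
  rintro _ ⟨t0, ht0, x0, hx0, u, hu, hfin, t, ht, htτ, rfl⟩
  exact ⟨t0, ht0, x0, hx0.trans hr, u, hu, hfin, t, ht, by linarith, rfl⟩

lemma nonneg_of_mem_gainExcess {γ : ℝ → ℝ} {r τ y : ℝ} (hy : y ∈ gainExcess S nrm γ r τ) :
    0 ≤ y := by
  obtain ⟨_, _, _, _, _, _, _, _, _, _, rfl⟩ := hy
  exact le_max_right _ _

lemma mem_upperBounds_gainExcess {γ : ℝ → ℝ} {r τ C : ℝ} (hC : 0 ≤ C)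
    (h : ∀ t0 ≥ (0:ℝ), ∀ x0 : X, ‖x0‖ ≤ r → ∀ u ∈ S.U, nrm u < ⊤ → ∀ t ≥ t0, t0 + τ ≤ t →
      ‖S.phi t t0 x0 u‖ ≤ C + γ (nrm u).toReal) :
    C ∈ upperBounds (gainExcess S nrm γ r τ) := by
  rintro _ ⟨t0, ht0, x0, hx0, u, hu, hfin, t, ht, htτ, rfl⟩
  exact max_le (by linarith [h t0 ht0 x0 hx0 u hu hfin t ht htτ]) hC

end Envelopes

section Converse

variable {S : Sys X Uv} {nrm : (ℝ → Uv) → ENNReal}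

lemma UBRS.ugs (hB : UBRS S nrm) (hC : UCEP S nrm) (hG : UUAG S nrm) : UGS S nrm := by
  have hbdd : ∀ c, BddAbove (reachableNorms S nrm c) := fun c => by
    obtain ⟨C, hC⟩ := hB.exists_bound_of_uuag hG (r := max c 1) (s := max c 1)
      (by positivity) (by positivity)
    exact ⟨C, mem_upperBounds_reachableNorms fun t0 ht0 x0 hx0 u hu hnu =>
      hC t0 ht0 x0 (hx0.trans (le_max_left _ _)) u hu
        (hnu.trans (ENNReal.ofReal_le_ofReal (le_max_left _ _)))⟩
  obtain ⟨κ, hκ, hwκ⟩ := exists_classKInf_ge (w := fun c => sSup (reachableNorms S nrm c))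
    (fun _ c hcc => Real.sSup_le_sSup_of_nonneg (reachableNorms_mono hcc) (hbdd c)
      fun _ => nonneg_of_mem_reachableNorms)
    (Real.sSup_nonneg fun _ => nonneg_of_mem_reachableNorms)
    fun ε hε => by
      obtain ⟨δ, hδ, h⟩ := hC.exists_bound_of_uuag hG hε
      exact ⟨δ, hδ, Real.sSup_le (mem_upperBounds_reachableNorms h) hε.le⟩
  refine ⟨κ, κ, hκ, hκ, fun t0 ht0 x0 u hu hfin t ht => ?_⟩
  set c := max ‖x0‖ (nrm u).toReal
  have hmem : ‖S.phi t t0 x0 u‖ ∈ reachableNorms S nrm c :=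
    ⟨t0, ht0, x0, le_max_left _ _, u, hu,
      (ENNReal.le_ofReal_iff_toReal_le hfin.ne (by positivity)).2 (le_max_right _ _), t, ht, rfl⟩
  calc ‖S.phi t t0 x0 u‖ ≤ sSup (reachableNorms S nrm c) := le_csSup (hbdd c) hmem
    _ ≤ κ c := hwκ c (by positivity)
    _ ≤ κ ‖x0‖ + κ (nrm u).toReal := hκ.1.apply_max_le_add (norm_nonneg _) ENNReal.toReal_nonneg

lemma mem_upperBounds_gainExcess_of_ugs {α ρ γ : ℝ → ℝ} (hα : ClassK α)
    (hργ : ∀ s ≥ 0, ρ s ≤ γ s) (hest : ∀ t0 ≥ (0:ℝ), ∀ x0 : X, ∀ u ∈ S.U, nrm u < ⊤ → ∀ t ≥ t0,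
      ‖S.phi t t0 x0 u‖ ≤ α ‖x0‖ + ρ (nrm u).toReal) (r τ : ℝ) :
    α (max r 0) ∈ upperBounds (gainExcess S nrm γ r τ) :=
  mem_upperBounds_gainExcess (hα.nonneg (le_max_right _ _)) fun t0 ht0 x0 hx0 u hu hfin t ht _ =>
    calc ‖S.phi t t0 x0 u‖ ≤ α ‖x0‖ + ρ (nrm u).toReal := hest t0 ht0 x0 u hu hfin t ht
      _ ≤ α (max r 0) + γ (nrm u).toReal :=
        add_le_add (hα.apply_le_apply (norm_nonneg _) (hx0.trans (le_max_left _ _)))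
          (hργ _ ENNReal.toReal_nonneg)

lemma tendsto_sSup_gainExcess_of_uuag {ν γ : ℝ → ℝ} (hνγ : ∀ s ≥ 0, ν s ≤ γ s)
    (hG : ∀ r ε : ℝ, 0 < ε → ε ≤ r → ∃ T > (0:ℝ), ∀ t0 ≥ (0:ℝ), ∀ x0 : X, ‖x0‖ ≤ r →
      ∀ u ∈ S.U, nrm u < ⊤ → ∀ t ≥ t0 + T, ‖S.phi t t0 x0 u‖ ≤ ε + ν (nrm u).toReal) (r : ℝ) :
    Tendsto (fun τ => sSup (gainExcess S nrm γ r τ)) atTop (𝓝 0) := by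
  refine tendsto_order.2 ⟨fun a ha => .of_forall fun τ =>
    ha.trans_le (Real.sSup_nonneg fun _ => nonneg_of_mem_gainExcess), fun a ha => ?_⟩
  obtain ⟨T, -, hT⟩ := hG (max r (a / 2)) (a / 2) (half_pos ha) (le_max_right _ _)
  refine eventually_atTop.2 ⟨T, fun τ hτ => lt_of_le_of_lt ?_ (half_lt_self ha)⟩
  refine Real.sSup_le (mem_upperBounds_gainExcess (half_pos ha).le
    fun t0 ht0 x0 hx0 u hu hfin t _ htτ => ?_) (half_pos ha).le
  calc ‖S.phi t t0 x0 u‖ ≤ a / 2 + ν (nrm u).toReal :=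
        hT t0 ht0 x0 (hx0.trans (le_max_left _ _)) u hu hfin t (by linarith)
    _ ≤ a / 2 + γ (nrm u).toReal := add_le_add le_rfl (hνγ _ ENNReal.toReal_nonneg)

lemma UGS.iss (hS : UGS S nrm) (hG : UUAG S nrm) : ISS S nrm := by
  obtain ⟨α, ρ, hα, hρ, hest⟩ := hS
  obtain ⟨ν, hν, hG⟩ := hG
  set γ := fun s => ρ s + ν s
  have hbound := mem_upperBounds_gainExcess_of_ugs (γ := γ) hα.1
    (fun s hs => le_add_of_nonneg_right (hν.nonneg hs)) hest
  obtain ⟨β, hβ, hψβ⟩ := exists_classKL_ge (ψ := fun r τ => sSup (gainExcess S nrm γ r τ)) hα.1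
    (fun _ _ => Real.sSup_nonneg fun _ => nonneg_of_mem_gainExcess)
    (fun τ _ r hr => Real.sSup_le_sSup_of_nonneg (gainExcess_mono hr le_rfl) ⟨_, hbound r τ⟩
      fun _ => nonneg_of_mem_gainExcess)
    (fun r _ τ hτ => Real.sSup_le_sSup_of_nonneg (gainExcess_mono le_rfl hτ) ⟨_, hbound r _⟩
      fun _ => nonneg_of_mem_gainExcess)
    (fun r hr τ => by
      simpa [max_eq_left hr] using Real.sSup_le (hbound r τ) (hα.1.nonneg (le_max_right _ _)))
    (tendsto_sSup_gainExcess_of_uuag (fun s hs => le_add_of_nonneg_left (hρ.1.nonneg hs)) hG)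
  refine ⟨β, γ, hβ, hρ.add_classK hν, fun t0 ht0 x0 u hu hfin t ht => ?_⟩
  have hmem : max (‖S.phi t t0 x0 u‖ - γ (nrm u).toReal) 0 ∈ gainExcess S nrm γ ‖x0‖ (t - t0) :=
    ⟨t0, ht0, x0, le_rfl, u, hu, hfin, t, ht, by linarith, rfl⟩
  have := (le_max_left _ _).trans ((le_csSup ⟨_, hbound _ _⟩ hmem).trans
    (hψβ ‖x0‖ (norm_nonneg _) (t - t0) (sub_nonneg.2 ht)))
  linarith

end Converse

theorem ISS_iff_UBRS_UCEP_UUAG_general (S : Sys X Uv) (nrm : (ℝ → Uv) → ENNReal) :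
    ISS S nrm ↔ (UBRS S nrm ∧ UCEP S nrm ∧ UUAG S nrm) :=
  ⟨fun h => ⟨h.ubrs, h.ucep, h.uuag⟩, fun ⟨hB, hC, hG⟩ => (hB.ugs hC hG).iss hG⟩

/-- Theorem 3.4 (ε-δ characterization of ISS): a forward complete system is ISS with respect
to an admissible functional if and only if it has the UBRS, UCEP and UUAG properties. -/
theorem ISS_iff_UBRS_UCEP_UUAG (S : Sys X Uv) (nrm : (ℝ → Uv) → ENNReal)
    (hadm : IsAdmissible S nrm) :
    ISS S nrm ↔ (UBRS S nrm ∧ UCEP S nrm ∧ UUAG S nrm) :=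
  ISS_iff_UBRS_UCEP_UUAG_general S nrm
end

section
/- Consider the semilinear evolution equation ẋ(t)=Ax(t)+f(t,x(t),u(t)) on a Banach space X, where A generates a C0-semigroup T(·) and f satisfies conditions (SL1), (SL2), (SL3) and (SL4); let γ∈K∞ be the function from (SL3). Then for every r>0, ε>0 and T>0 there exists δ>0 such that the following holds: for every t0≥0, x0∈X and piecewise continuous input u with ∫₀^∞ γ(‖u(s)‖)ds ≤ δ, and every t*∈[t0,t0+T], if the mild solutions x(·) (with input u) and z(·) (with zero input), both with initial datum x(t0)=z(t0)=x0, are defined on [t0,t*] and satisfy ‖x(t)‖ ≤ r and ‖z(t)‖ ≤ r for all t∈[t0,t*], then ‖x(t)−z(t)‖ ≤ ε for all t∈[t0,t*]. -/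
open Set Filter MeasureTheory

/-- A strongly continuous semigroup of bounded linear operators on `X`. -/
structure C0Semigroup (X : Type*) [NormedAddCommGroup X] [NormedSpace ℝ X] where
  T : ℝ → X →L[ℝ] X
  map_zero : T 0 = ContinuousLinearMap.id ℝ X
  map_add : ∀ s t : ℝ, 0 ≤ s → 0 ≤ t → T (s + t) = (T s).comp (T t)
  strong_cont : ∀ x : X, ContinuousOn (fun t => T t x) (Ici 0)

variable {X Uv : Type*} [NormedAddCommGroup X] [NormedSpace ℝ X] [CompleteSpace X]
  [NormedAddCommGroup Uv] [NormedSpace ℝ Uv]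

/-- A piecewise continuous function `u : [0,∞) → Uv`. -/
def PWCont (u : ℝ → Uv) : Prop :=
  ∃ σ : ℕ → ℝ, σ 0 = 0 ∧ StrictMono σ ∧ Tendsto σ atTop atTop ∧
    ∀ k : ℕ, ∃ v : ℝ → Uv, ContinuousOn v (Icc (σ k) (σ (k + 1))) ∧
      ∀ t ∈ Ico (σ k) (σ (k + 1)), u t = v t

/-- Condition (SL1): `f` is piecewise continuous in `t` and continuous in its other
variables. -/
def CondSL1 (f : ℝ → X → Uv → X) : Prop :=
  ∃ σ : ℕ → ℝ, σ 0 = 0 ∧ StrictMono σ ∧ Tendsto σ atTop atTop ∧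
    ∀ k : ℕ, ∃ g : ℝ → X → Uv → X,
      ContinuousOn (fun p : ℝ × X × Uv => g p.1 p.2.1 p.2.2)
        {p : ℝ × X × Uv | p.1 ∈ Icc (σ k) (σ (k + 1))} ∧
      ∀ t ∈ Ico (σ k) (σ (k + 1)), ∀ (ξ : X) (μ : Uv), f t ξ μ = g t ξ μ

/-- `L` is a Lipschitz constant for `f(t, ·, μ)` on the ball of radius `r`, uniformly in
`t ≥ 0` and in `‖μ‖ ≤ r`. -/
def CondSL2With (f : ℝ → X → Uv → X) (r L : ℝ) : Prop :=
  ∀ t ≥ (0:ℝ), ∀ (ξ ω : X) (μ : Uv), ‖ξ‖ ≤ r → ‖ω‖ ≤ r → ‖μ‖ ≤ r →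
    ‖f t ξ μ - f t ω μ‖ ≤ L * ‖ξ - ω‖

/-- Condition (SL2): `f(t,ξ,μ)` is Lipschitz in `ξ` on bounded sets, uniformly in `t` and
for `μ` in bounded sets. -/
def CondSL2 (f : ℝ → X → Uv → X) : Prop :=
  ∀ r > (0:ℝ), ∃ L, 0 ≤ L ∧ CondSL2With f r L

/-- Condition (SL3), with the bound witnessed by `γ ∈ K∞` and a nondecreasing
`N : [0,∞) → (0,∞)`. -/
def CondSL3With (f : ℝ → X → Uv → X) (γ N : ℝ → ℝ) : Prop :=
  ClassKInf γ ∧ MonotoneOn N (Ici 0) ∧ (∀ r ≥ (0:ℝ), 0 < N r) ∧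
    ∀ t ≥ (0:ℝ), ∀ (ξ : X) (μ : Uv), ‖f t ξ μ‖ ≤ N ‖ξ‖ * (1 + γ ‖μ‖)

/-- Condition (SL3). -/
def CondSL3 (f : ℝ → X → Uv → X) : Prop := ∃ γ N, CondSL3With f γ N

/-- Condition (SL4): continuity in the input at the zero input, uniformly in time and on
bounded sets of states. -/
def CondSL4 (f : ℝ → X → Uv → X) : Prop :=
  ∀ r > (0:ℝ), ∀ ε > (0:ℝ), ∃ δ > (0:ℝ),
    ∀ t ≥ (0:ℝ), ∀ (ξ : X) (μ : Uv), ‖ξ‖ ≤ r → ‖μ‖ ≤ δ →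
      ‖f t ξ μ - f t ξ 0‖ < ε

/-- `x` is a mild (weak) solution of `ẋ = Ax + f(t,x,u(t))` on the interval `[t0, T]`. -/
def IsMild (Tg : C0Semigroup X) (f : ℝ → X → Uv → X) (u : ℝ → Uv)
    (t0 T : ℝ) (x : ℝ → X) : Prop :=
  ContinuousOn x (Icc t0 T) ∧
    ∀ t ∈ Icc t0 T,
      x t = Tg.T (t - t0) (x t0) + ∫ s in t0..t, Tg.T (t - s) (f s (x s) (u s))

/-!
Subtract the variation-of-constants formulas for `x` and `z`. The semigroup is bounded by some `M`
on `[0, T]` (uniform boundedness principle), `f` is `L`-Lipschitz in the state on the `r`-ball,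
and by (SL3)–(SL4) switching the input off changes `f` by at most `ε₁ + c γ(‖u(s)‖)`. Hence
`‖x(t) - z(t)‖ ≤ M (ε₁ T + c δ) + M L ∫ ‖x - z‖`, and Grönwall's inequality bounds
`‖x(t) - z(t)‖` by `M (ε₁ T + c δ) e^{M L T}`, which is at most `ε` once `ε₁` and `δ` are small.
-/

open Topology

theorem ClassK.nonneg_s15 {α : ℝ → ℝ} (hα : ClassK α) {y : ℝ} (hy : 0 ≤ y) : 0 ≤ α y :=
  hα.2.2 ▸ hα.2.1.monotoneOn self_mem_Ici hy hy

theorem ClassK.pos {α : ℝ → ℝ} (hα : ClassK α) {y : ℝ} (hy : 0 < y) : 0 < α y :=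
  hα.2.2 ▸ hα.2.1 self_mem_Ici hy.le hy

theorem ClassK.continuous_comp_norm {α : ℝ → ℝ} (hα : ClassK α) {E : Type*}
    [SeminormedAddCommGroup E] : Continuous fun v : E => α ‖v‖ :=
  hα.1.comp_continuous continuous_norm fun v => norm_nonneg v

theorem exists_mem_Ico_of_tendsto_atTop {σ : ℕ → ℝ} (hσ : Tendsto σ atTop atTop) {s : ℝ}
    (hs : σ 0 ≤ s) : ∃ k, s ∈ Ico (σ k) (σ (k + 1)) := by
  classical
  have hex : ∃ n, s < σ n := (hσ.eventually_gt_atTop s).exists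
  obtain ⟨k, hk⟩ : ∃ k, Nat.find hex = k + 1 :=
    Nat.exists_eq_succ_of_ne_zero fun h => (Nat.find_spec hex).not_ge (h ▸ hs)
  exact ⟨k, not_lt.1 (Nat.find_min hex (by omega)), hk ▸ Nat.find_spec hex⟩

theorem aestronglyMeasurable_of_continuousOn_pieces {E : Type*} [NormedAddCommGroup E]
    {F : ℝ → E} {ι : Type*} [Countable ι] {S : ι → Set ℝ} (hS : ∀ i, MeasurableSet (S i))
    {A : Set ℝ} (hA : MeasurableSet A) (hcover : A ⊆ ⋃ i, S i)
    (hF : ∀ i, ContinuousOn F (S i ∩ A)) : AEStronglyMeasurable F (volume.restrict A) := by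
  rw [← inter_eq_right.2 hcover, iUnion_inter, aestronglyMeasurable_iUnion_iff]
  exact fun i => (hF i).aestronglyMeasurable ((hS i).inter hA)

theorem le_mul_exp_of_le_add_mul_integral {g : ℝ → ℝ} {a b C K : ℝ}
    (hg : ContinuousOn g (Icc a b)) (hg0 : ∀ t ∈ Icc a b, 0 ≤ g t) (hK : 0 ≤ K)
    (h : ∀ t ∈ Icc a b, g t ≤ C + K * ∫ s in a..t, g s) :
    ∀ t ∈ Icc a b, g t ≤ C * Real.exp (K * (t - a)) := by
  intro t ht
  have hab : a ≤ b := ht.1.trans ht.2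
  -- extending `g` continuously to `ℝ` makes `∫ s in a..t, g s` differentiable everywhere
  set G : ℝ → ℝ := fun s => g (projIcc a b hab s)
  have hG : Continuous G := hg.comp_continuous (continuous_subtype_val.comp continuous_projIcc)
    fun s => (projIcc a b hab s).2
  have hGg : ∀ s ∈ Icc a b, G s = g s := fun s hs => by simp [G, projIcc_of_mem hab hs]
  set H : ℝ → ℝ := fun s => ∫ r in a..s, G r
  have hgH : ∀ s ∈ Icc a b, ∫ r in a..s, g r = H s := fun s hs =>
    intervalIntegral.integral_congr fun r hr =>
      (hGg r (uIcc_subset_Icc (left_mem_Icc.2 hab) hs hr)).symm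
  have hgK : ∀ s ∈ Icc a b, g s ≤ C + K * H s := fun s hs => hgH s hs ▸ h s hs
  have hH : ∀ s, HasDerivAt H (G s) s := fun s => (hG.integral_hasStrictDerivAt a s).hasDerivAt
  rcases hK.eq_or_lt with rfl | hKpos
  · simpa using h t ht
  have hgron := norm_le_gronwallBound_of_norm_deriv_right_le (δ := 0) (K := K) (ε := C)
    (fun s _ => (hH s).continuousAt.continuousWithinAt) (fun s _ => (hH s).hasDerivWithinAt)
    (by simp [H]) (fun s hs => by
      have hs' := Ico_subset_Icc_self hs
      rw [hGg s hs', Real.norm_of_nonneg (hg0 s hs')]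
      nlinarith [hgK s hs', Real.le_norm_self (H s)]) t ht
  simp only [gronwallBound_of_K_ne_0 hKpos.ne', Real.norm_eq_abs, zero_mul, zero_add] at hgron
  have hKH : K * H t ≤ C * (Real.exp (K * (t - a)) - 1) := by
    have := mul_le_mul_of_nonneg_left ((le_abs_self _).trans hgron) hK
    rwa [← mul_assoc, mul_div_cancel₀ _ hKpos.ne'] at this
  linarith [hgK t ht]

namespace C0Semigroup

variable {E : Type*} [NormedAddCommGroup E] [NormedSpace ℝ E]

theorem exists_norm_le [CompleteSpace E] (Tg : C0Semigroup E) (b : ℝ) :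
    ∃ M > 0, ∀ τ ∈ Icc 0 b, ‖Tg.T τ‖ ≤ M := by
  have hpt (x : E) : ∃ C, ∀ τ : Icc 0 b, ‖Tg.T τ x‖ ≤ C := by
    obtain ⟨C, hC⟩ := isCompact_Icc.exists_bound_of_continuousOn
      ((Tg.strong_cont x).mono Icc_subset_Ici_self)
    exact ⟨C, fun τ => hC τ τ.2⟩
  obtain ⟨C, hC⟩ := banach_steinhaus hpt
  exact ⟨max C 1, by positivity, fun τ hτ => (hC ⟨τ, hτ⟩).trans (le_max_left _ _)⟩

theorem continuousOn_apply_sub (Tg : C0Semigroup E) {t b M : ℝ}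
    (hM : ∀ τ ∈ Icc 0 b, ‖Tg.T τ‖ ≤ M) {A : Set ℝ} {w : ℝ → E} (hw : ContinuousOn w A)
    (hA : ∀ s ∈ A, t - s ∈ Icc 0 b) : ContinuousOn (fun s => Tg.T (t - s) (w s)) A := by
  intro s₀ hs₀
  have hshift : Tendsto (fun s => Tg.T (t - s) (w s₀)) (𝓝[A] s₀) (𝓝 (Tg.T (t - s₀) (w s₀))) :=
    ((Tg.strong_cont (w s₀)).comp (continuous_sub_left t).continuousOn
      fun s hs => (hA s hs).1) s₀ hs₀
  have hsmall : Tendsto (fun s => Tg.T (t - s) (w s - w s₀)) (𝓝[A] s₀) (𝓝 0) := by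
    refine squeeze_zero_norm' (a := fun s => M * ‖w s - w s₀‖) ?_ ?_
    · filter_upwards [self_mem_nhdsWithin] with s hs
      exact (Tg.T (t - s)).le_of_opNorm_le (hM _ (hA s hs)) _
    · simpa using ((hw s₀ hs₀).sub_const (w s₀)).norm.const_mul M
  simpa [ContinuousWithinAt, ← map_add] using hsmall.add hshift

end C0Semigroup

theorem setIntegral_le_of_lintegral_ofReal_le {α : Type*} [MeasurableSpace α] {μ : Measure α}
    {φ : α → ℝ} {S T : Set α} {δ : ℝ} (hφ : IntegrableOn φ T μ) (hφ0 : ∀ s ∈ T, 0 ≤ φ s)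
    (hT : MeasurableSet T) (hST : S ⊆ T) (hδ : 0 ≤ δ)
    (h : ∫⁻ s in T, ENNReal.ofReal (φ s) ∂μ ≤ ENNReal.ofReal δ) : ∫ s in S, φ s ∂μ ≤ δ := by
  have hφ0' : 0 ≤ᵐ[μ.restrict T] φ := (ae_restrict_iff' hT).2 (ae_of_all _ hφ0)
  calc ∫ s in S, φ s ∂μ ≤ ∫ s in T, φ s ∂μ := setIntegral_mono_set hφ hφ0' hST.eventuallyLE
    _ ≤ δ := by
      rw [integral_eq_lintegral_of_nonneg_ae hφ0' hφ.aestronglyMeasurable]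
      exact ENNReal.toReal_le_of_le_ofReal hδ h

section Semilinear

variable {E U : Type*} [NormedAddCommGroup E] [NormedAddCommGroup U]
  {f : ℝ → E → U → E} {u : ℝ → U} {γ : ℝ → ℝ}

theorem pwCont_const (c : U) : PWCont fun _ : ℝ => c :=
  ⟨fun n => n, Nat.cast_zero, Nat.strictMono_cast, tendsto_natCast_atTop_atTop,
    fun _ => ⟨fun _ => c, continuousOn_const, fun _ _ => rfl⟩⟩

theorem PWCont.aestronglyMeasurable (hu : PWCont u) :
    AEStronglyMeasurable u (volume.restrict (Ici 0)) := by
  obtain ⟨σ, hσ0, -, hσ, hv⟩ := hu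
  choose v hvc hvu using hv
  refine aestronglyMeasurable_of_continuousOn_pieces (fun k => measurableSet_Ico)
    measurableSet_Ici (fun s hs => mem_iUnion.2 (exists_mem_Ico_of_tendsto_atTop hσ (hσ0 ▸ hs)))
    fun k => ?_
  exact ((hvc k).mono (inter_subset_left.trans Ico_subset_Icc_self)).congr
    fun s hs => hvu k s hs.1

theorem PWCont.integrableOn_Ioi (hu : PWCont u) (hγ : ClassK γ) {δ : ℝ}
    (h : ∫⁻ s in Ioi 0, ENNReal.ofReal (γ ‖u s‖) ≤ ENNReal.ofReal δ) :
    IntegrableOn (fun s => γ ‖u s‖) (Ioi 0) := by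
  refine ⟨hγ.continuous_comp_norm.comp_aestronglyMeasurable
    (hu.aestronglyMeasurable.mono_measure (Measure.restrict_mono Ioi_subset_Ici_self le_rfl)), ?_⟩
  rw [hasFiniteIntegral_iff_ofReal (ae_of_all _ fun s => hγ.nonneg_s15 (norm_nonneg _))]
  exact h.trans_lt ENNReal.ofReal_lt_top

theorem PWCont.intervalIntegral_le (hu : PWCont u) (hγ : ClassK γ) {δ a b : ℝ} (hδ : 0 ≤ δ)
    (h : ∫⁻ s in Ioi 0, ENNReal.ofReal (γ ‖u s‖) ≤ ENNReal.ofReal δ) (ha : 0 ≤ a) (hab : a ≤ b) :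
    ∫ s in a..b, γ ‖u s‖ ≤ δ := by
  rw [intervalIntegral.integral_of_le hab]
  exact setIntegral_le_of_lintegral_ofReal_le (hu.integrableOn_Ioi hγ h)
    (fun s _ => hγ.nonneg_s15 (norm_nonneg _)) measurableSet_Ioi (fun s hs => ha.trans_lt hs.1) hδ h

theorem CondSL3With.norm_le {N : ℝ → ℝ} (h : CondSL3With f γ N) {t r : ℝ} (ht : 0 ≤ t)
    {ξ : E} (hξ : ‖ξ‖ ≤ r) (μ : U) : ‖f t ξ μ‖ ≤ N r * (1 + γ ‖μ‖) :=
  (h.2.2.2 t ht ξ μ).trans <| mul_le_mul_of_nonneg_right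
    (h.2.1 (norm_nonneg ξ) ((norm_nonneg ξ).trans hξ) hξ)
    (by linarith [h.1.1.nonneg_s15 (norm_nonneg μ)])

/-- By (SL4), inputs with `‖μ‖ ≤ δ` move `f` by less than `ε`; by (SL3), larger ones move it by
at most `N(r) (2 + γ ‖μ‖)`, a multiple of `γ ‖μ‖` because `γ ‖μ‖ ≥ γ δ > 0`. -/
theorem CondSL3With.exists_norm_sub_zero_le {N : ℝ → ℝ} (h3 : CondSL3With f γ N)
    (h4 : CondSL4 f) {r ε : ℝ} (hr : 0 < r) (hε : 0 < ε) :
    ∃ c > 0, ∀ t ≥ (0:ℝ), ∀ (ξ : E) (μ : U), ‖ξ‖ ≤ r →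
      ‖f t ξ μ - f t ξ 0‖ ≤ ε + c * γ ‖μ‖ := by
  obtain ⟨δ, hδ, hsmall⟩ := h4 r hr ε hε
  have hγδ : 0 < γ δ := h3.1.1.pos hδ
  have hNr : 0 < N r := h3.2.2.1 r hr.le
  refine ⟨N r * (2 / γ δ + 1), by positivity, fun t ht ξ μ hξ => ?_⟩
  have hγμ : 0 ≤ γ ‖μ‖ := h3.1.1.nonneg_s15 (norm_nonneg μ)
  rcases le_or_gt ‖μ‖ δ with hμ | hμ
  · have : 0 ≤ N r * (2 / γ δ + 1) * γ ‖μ‖ := by positivity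
    linarith [hsmall t ht ξ μ hξ hμ]
  · have hbig : γ δ ≤ γ ‖μ‖ := (h3.1.1.2.1 hδ.le (norm_nonneg μ) hμ).le
    have h0 := h3.norm_le ht hξ (0 : U)
    rw [norm_zero, h3.1.1.2.2, add_zero, mul_one] at h0
    calc ‖f t ξ μ - f t ξ 0‖ ≤ N r * (1 + γ ‖μ‖) + N r :=
          (norm_sub_le _ _).trans (add_le_add (h3.norm_le ht hξ μ) h0)
      _ = N r * (2 + γ ‖μ‖) := by ring
      _ ≤ N r * (2 / γ δ * γ ‖μ‖ + γ ‖μ‖) := by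
          gcongr
          rw [div_mul_eq_mul_div, le_div_iff₀ hγδ]
          linarith
      _ = N r * (2 / γ δ + 1) * γ ‖μ‖ := by ring
      _ ≤ ε + N r * (2 / γ δ + 1) * γ ‖μ‖ := by linarith

end Semilinear

section MildSolution

variable {E U : Type*} [NormedAddCommGroup E] [NormedSpace ℝ E]
  {Tg : C0Semigroup E} {f : ℝ → E → U → E} {u : ℝ → U} {γ : ℝ → ℝ} {t0 t : ℝ}

theorem IsMild.mono {x : ℝ → E} {t' : ℝ} (hx : IsMild Tg f u t0 t' x) (ht : t ≤ t') :
    IsMild Tg f u t0 t x :=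
  ⟨hx.1.mono (Icc_subset_Icc_right ht), fun s hs => hx.2 s ⟨hs.1, hs.2.trans ht⟩⟩

theorem IsMild.sub_eq_integral {u' : ℝ → U} {x z : ℝ → E} (hx : IsMild Tg f u t0 t x)
    (hz : IsMild Tg f u' t0 t z) (hxz : x t0 = z t0) (ht : t0 ≤ t)
    (hxi : IntegrableOn (fun s => Tg.T (t - s) (f s (x s) (u s))) (Ioc t0 t))
    (hzi : IntegrableOn (fun s => Tg.T (t - s) (f s (z s) (u' s))) (Ioc t0 t)) :
    x t - z t = ∫ s in t0..t, Tg.T (t - s) (f s (x s) (u s) - f s (z s) (u' s)) := by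
  simp_rw [map_sub]
  rw [intervalIntegral.integral_sub ((intervalIntegrable_iff_integrableOn_Ioc_of_le ht).2 hxi)
    ((intervalIntegrable_iff_integrableOn_Ioc_of_le ht).2 hzi), hx.2 t ⟨ht, le_rfl⟩,
    hz.2 t ⟨ht, le_rfl⟩, hxz]
  abel

variable [NormedAddCommGroup U]

theorem aestronglyMeasurable_semigroup_integrand [CompleteSpace E] (hf : CondSL1 f)
    (hu : PWCont u) (ht0 : 0 ≤ t0) {x : ℝ → E} (hx : ContinuousOn x (Icc t0 t)) :
    AEStronglyMeasurable (fun s => Tg.T (t - s) (f s (x s) (u s)))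
      (volume.restrict (Ioc t0 t)) := by
  obtain ⟨M, -, hM⟩ := Tg.exists_norm_le (t - t0)
  obtain ⟨σ, hσ0, -, hσ, hg⟩ := hf
  choose g hgc hfg using hg
  obtain ⟨ρ, hρ0, -, hρ, hv⟩ := hu
  choose v hvc hvu using hv
  refine aestronglyMeasurable_of_continuousOn_pieces
    (S := fun p : ℕ × ℕ => Ico (σ p.1) (σ (p.1 + 1)) ∩ Ico (ρ p.2) (ρ (p.2 + 1)))
    (fun _ => measurableSet_Ico.inter measurableSet_Ico) measurableSet_Ioc (fun s hs => ?_)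
    fun ⟨k, j⟩ => ?_
  · have hs0 : 0 ≤ s := ht0.trans hs.1.le
    obtain ⟨k, hk⟩ := exists_mem_Ico_of_tendsto_atTop hσ (hσ0 ▸ hs0)
    obtain ⟨j, hj⟩ := exists_mem_Ico_of_tendsto_atTop hρ (hρ0 ▸ hs0)
    exact mem_iUnion.2 ⟨(k, j), hk, hj⟩
  · set P := (Ico (σ k) (σ (k + 1)) ∩ Ico (ρ j) (ρ (j + 1))) ∩ Ioc t0 t
    have hPσ : P ⊆ Icc (σ k) (σ (k + 1)) := fun s hs => Ico_subset_Icc_self hs.1.1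
    have hPρ : P ⊆ Icc (ρ j) (ρ (j + 1)) := fun s hs => Ico_subset_Icc_self hs.1.2
    have hPt : P ⊆ Icc t0 t := fun s hs => Ioc_subset_Icc_self hs.2
    have hw : ContinuousOn (fun s => g k s (x s) (v j s)) P :=
      (hgc k).comp (continuousOn_id.prodMk ((hx.mono hPt).prodMk ((hvc j).mono hPρ))) hPσ
    refine (Tg.continuousOn_apply_sub (t := t) hM hw fun s hs => ?_).congr fun s hs => ?_
    · exact ⟨by linarith [(hPt hs).2], by linarith [(hPt hs).1]⟩
    · simp only [hfg k s hs.1.1, hvu j s hs.1.2]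

theorem integrableOn_semigroup_integrand [CompleteSpace E] {N : ℝ → ℝ}
    (hf1 : CondSL1 f) (hf3 : CondSL3With f γ N) (hu : PWCont u)
    (hγu : IntegrableOn (fun s => γ ‖u s‖) (Ioc t0 t)) (ht0 : 0 ≤ t0) {x : ℝ → E}
    (hx : ContinuousOn x (Icc t0 t)) :
    IntegrableOn (fun s => Tg.T (t - s) (f s (x s) (u s))) (Ioc t0 t) := by
  obtain ⟨M, hM0, hM⟩ := Tg.exists_norm_le (t - t0)
  obtain ⟨R, hR⟩ := isCompact_Icc.exists_bound_of_continuousOn hx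
  refine Integrable.mono'
    (((integrableOn_const (C := (1:ℝ)) measure_Ioc_lt_top.ne).add hγu).const_mul (M * N R))
    (aestronglyMeasurable_semigroup_integrand hf1 hu ht0 hx) ?_
  refine (ae_restrict_iff' measurableSet_Ioc).2 (ae_of_all _ fun s hs => ?_)
  have hs := Ioc_subset_Icc_self hs
  calc ‖Tg.T (t - s) (f s (x s) (u s))‖ ≤ M * ‖f s (x s) (u s)‖ :=
        (Tg.T (t - s)).le_of_opNorm_le (hM _ ⟨by linarith [hs.2], by linarith [hs.1]⟩) _
    _ ≤ M * (N R * (1 + γ ‖u s‖)) :=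
        mul_le_mul_of_nonneg_left (hf3.norm_le (ht0.trans hs.1) (hR s hs) _) hM0.le
    _ = M * N R * (1 + γ ‖u s‖) := by ring

theorem IsMild.norm_sub_le_of_zero_input [CompleteSpace E] {N : ℝ → ℝ} {x z : ℝ → E}
    {r L M ε c : ℝ} (hf1 : CondSL1 f) (hL : CondSL2With f r L) (hf3 : CondSL3With f γ N)
    (hc : ∀ s ≥ (0:ℝ), ∀ (ξ : E) (μ : U), ‖ξ‖ ≤ r → ‖f s ξ μ - f s ξ 0‖ ≤ ε + c * γ ‖μ‖)
    (hM : ∀ τ ∈ Icc 0 (t - t0), ‖Tg.T τ‖ ≤ M) (hu : PWCont u)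
    (hγu : IntegrableOn (fun s => γ ‖u s‖) (Ioc t0 t)) (ht0 : 0 ≤ t0) (ht : t0 ≤ t)
    (hx : IsMild Tg f u t0 t x) (hz : IsMild Tg f (fun _ => 0) t0 t z) (hxz : x t0 = z t0)
    (hr : ∀ s ∈ Icc t0 t, ‖x s‖ ≤ r ∧ ‖z s‖ ≤ r) :
    ‖x t - z t‖ ≤
      M * (ε * (t - t0) + c * (∫ s in t0..t, γ ‖u s‖) + L * ∫ s in t0..t, ‖x s - z s‖) := by
  have hr0 : 0 ≤ r := (norm_nonneg _).trans (hr t0 ⟨le_rfl, ht⟩).1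
  have hM0 : 0 ≤ M := (norm_nonneg _).trans (hM 0 ⟨le_rfl, sub_nonneg.2 ht⟩)
  have hγ0 : IntegrableOn (fun _ => γ ‖(0 : U)‖) (Ioc t0 t) := by
    simp [hf3.1.1.2.2]
  have hφ : IntervalIntegrable (fun s => γ ‖u s‖) volume t0 t :=
    (intervalIntegrable_iff_integrableOn_Ioc_of_le ht).2 hγu
  have hd : IntervalIntegrable (fun s => ‖x s - z s‖) volume t0 t :=
    (hx.1.sub hz.1).norm.intervalIntegrable_of_Icc ht
  rw [hx.sub_eq_integral hz hxz ht
    (integrableOn_semigroup_integrand hf1 hf3 hu hγu ht0 hx.1)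
    (integrableOn_semigroup_integrand hf1 hf3 (pwCont_const 0) hγ0 ht0 hz.1)]
  calc _ ≤ ∫ s in t0..t, M * (ε + c * γ ‖u s‖ + L * ‖x s - z s‖) := by
        refine intervalIntegral.norm_integral_le_of_norm_le ht (ae_of_all _ fun s hs => ?_)
          (((intervalIntegrable_const.add (hφ.const_mul c)).add (hd.const_mul L)).const_mul M)
        have hs := Ioc_subset_Icc_self hs
        have hxs := (hr s hs).1
        refine (Tg.T (t - s)).le_of_opNorm_le (hM _ ⟨by linarith [hs.2], by linarith [hs.1]⟩) _
          |>.trans (mul_le_mul_of_nonneg_left ?_ hM0)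
        calc _ ≤ ‖f s (x s) (u s) - f s (x s) 0‖ + ‖f s (x s) 0 - f s (z s) 0‖ :=
              norm_sub_le_norm_sub_add_norm_sub _ _ _
          _ ≤ ε + c * γ ‖u s‖ + L * ‖x s - z s‖ :=
              add_le_add (hc s (ht0.trans hs.1) _ _ hxs)
                (hL s (ht0.trans hs.1) _ _ 0 hxs (hr s hs).2 (by simpa using hr0))
    _ = _ := by
        rw [intervalIntegral.integral_const_mul, intervalIntegral.integral_add
          (intervalIntegrable_const.add (hφ.const_mul c)) (hd.const_mul L),
          intervalIntegral.integral_add intervalIntegrable_const (hφ.const_mul c),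
          intervalIntegral.integral_const, intervalIntegral.integral_const_mul,
          intervalIntegral.integral_const_mul, smul_eq_mul, mul_comm (t - t0)]

end MildSolution

/-- Lemma 5.4: under (SL1)–(SL4) (with `γ` from (SL3)), the semilinear system satisfies
Assumption 1 with the admissible functional `u ↦ ∫₀^∞ γ(‖u(s)‖) ds`. -/
theorem semilinear_assumptionA1 (Tg : C0Semigroup X) (f : ℝ → X → Uv → X)
    (hSL1 : CondSL1 f) (hSL2 : CondSL2 f)
    (γ N : ℝ → ℝ) (hSL3 : CondSL3With f γ N) (hSL4 : CondSL4 f) :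
    ∀ r > (0:ℝ), ∀ ε > (0:ℝ), ∀ T > (0:ℝ), ∃ δ > (0:ℝ),
      ∀ t0 ≥ (0:ℝ), ∀ u : ℝ → Uv, PWCont u →
        (∫⁻ s in Ioi (0:ℝ), ENNReal.ofReal (γ ‖u s‖)) ≤ ENNReal.ofReal δ →
        ∀ tstar ∈ Icc t0 (t0 + T), ∀ x z : ℝ → X,
          IsMild Tg f u t0 tstar x →
          IsMild Tg f (fun _ => 0) t0 tstar z →
          x t0 = z t0 →
          (∀ t ∈ Icc t0 tstar, ‖x t‖ ≤ r ∧ ‖z t‖ ≤ r) →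
          ∀ t ∈ Icc t0 tstar, ‖x t - z t‖ ≤ ε := by
  intro r hr ε hε T hT
  obtain ⟨M, hM0, hM⟩ := Tg.exists_norm_le T
  obtain ⟨L, hL0, hL⟩ := hSL2 r hr
  set B := Real.exp (M * L * T)
  -- `B` is the Grönwall factor; `ε₁ := ε / (2 M T B)` and `δ := ε / (2 M c B)` make each of the
  -- error terms `M ε₁ T` and `M c δ` equal to `ε / (2 B)`
  obtain ⟨c, hc0, hc⟩ :=
    hSL3.exists_norm_sub_zero_le hSL4 hr (ε := ε / (2 * M * T * B)) (by positivity)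
  refine ⟨ε / (2 * M * c * B), by positivity, ?_⟩
  intro t0 ht0 u hu hδ tstar htstar x z hx hz hxz hbound
  have hγu := hu.integrableOn_Ioi hSL3.1.1 hδ
  have hdist : ∀ t ∈ Icc t0 tstar,
      ‖x t - z t‖ ≤ ε / B + M * L * ∫ s in t0..t, ‖x s - z s‖ := by
    intro t ht
    have htT : t - t0 ≤ T := by linarith [ht.2, htstar.2]
    have hest := (hx.mono ht.2).norm_sub_le_of_zero_input hSL1 hL hSL3 hc
      (fun τ hτ => hM τ ⟨hτ.1, hτ.2.trans htT⟩) hu (hγu.mono_set fun s hs => ht0.trans_lt hs.1)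
      ht0 ht.1 (hz.mono ht.2) hxz fun s hs => hbound s ⟨hs.1, hs.2.trans ht.2⟩
    calc ‖x t - z t‖ ≤ M * (ε / (2 * M * T * B) * T + c * (ε / (2 * M * c * B))
          + L * ∫ s in t0..t, ‖x s - z s‖) := by
          refine hest.trans (mul_le_mul_of_nonneg_left ?_ hM0.le)
          gcongr
          exact hu.intervalIntegral_le hSL3.1.1 (by positivity) hδ ht0 ht.1
      _ = ε / B + M * L * ∫ s in t0..t, ‖x s - z s‖ := by
          field_simp
          ring
  intro t ht
  calc ‖x t - z t‖ ≤ ε / B * Real.exp (M * L * (t - t0)) :=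
        le_mul_exp_of_le_add_mul_integral (hx.1.sub hz.1).norm (fun _ _ => norm_nonneg _)
          (by positivity) hdist t ht
    _ ≤ ε / B * B := by
        gcongr
        exact Real.exp_le_exp.2 (by gcongr; linarith [ht.2, htstar.2])
    _ = ε := div_mul_cancel₀ _ (Real.exp_pos _).ne'
end
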